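/- arXiv:1607.02253 — 2 statements merged into one kernel-verified Lean document; each statement's English description precedes it below -/
import Mathlib

section
/- Let a₁,…,a_n ∈ ℝ^d, let α = (α₁,…,α_n) be a multi-index with each α_i > 0 and |α| = ∑ α_i, let μ_h be the centered Gaussian of variance h on ℝ^d, let P : ℝ^d → ℝ^d be an orthogonal projection, and let p ≥ 1. Then ‖∏_{i=1}^n ⟨a_i, P(·)⟩^{α_i} − ∏_{i=1}^n ⟨a_i, ·⟩^{α_i}‖_{L^p(μ_h)} ≤ K(p|α|)^{|α|} h^{|α|/2} (max_i |a_i|)^{|α|−1} ∑_{i=1}^n α_i |P a_i − a_i|, where K(q) = 2^{1/2} π^{-1/(2q)} Γ((q+1)/2)^{1/q}. -/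
open MeasureTheory Real Finset ContinuousLinearMap
open scoped ENNReal RealInnerProductSpace

/-- The centered Gaussian measure of variance `h` on `ℝ^d`. -/
noncomputable def gaussE (d : ℕ) (h : ℝ) : Measure (EuclideanSpace ℝ (Fin d)) :=
  volume.withDensity (fun y =>
    ENNReal.ofReal ((2 * π * h) ^ (-(d : ℝ) / 2) * Real.exp (-‖y‖ ^ 2 / (2 * h))))

/-- The Gaussian moment constant `K(q) = 2^{1/2} π^{-1/(2q)} Γ((q+1)/2)^{1/q}`. -/
noncomputable def Kconst (q : ℝ) : ℝ :=
  (2 : ℝ) ^ ((1 : ℝ) / 2) * π ^ (-(1 : ℝ) / (2 * q)) * (Gamma ((q + 1) / 2)) ^ (1 / q)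

section Aux

open Set

variable {ι : Type*} {Ω : Type*} [MeasurableSpace Ω] {μ : Measure Ω}

theorem holder_prod (s : Finset ι) (f : ι → Ω → ℝ)
    (hf : ∀ i, AEStronglyMeasurable (f i) μ) (r : ℝ≥0∞) {p : ℝ≥0∞}
    (hp : p⁻¹ = s.card * r⁻¹) :
    eLpNorm (fun x => ∏ i ∈ s, f i x) p μ ≤ ∏ i ∈ s, eLpNorm (f i) r μ := by
  classical
  induction s using Finset.induction generalizing p with
  | empty =>
      simp only [Finset.card_empty, Nat.cast_zero, zero_mul, ENNReal.inv_eq_zero] at hp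
      subst hp
      simp only [Finset.prod_empty]
      rw [eLpNorm_exponent_top]
      refine (eLpNormEssSup_le_of_ae_bound (C := 1) ?_).trans_eq ?_
      · filter_upwards with x; simp
      · simp
  | @insert a t ha ih =>
      have hp' : ((t.card : ℝ≥0∞) * r⁻¹)⁻¹⁻¹ = (t.card : ℝ≥0∞) * r⁻¹ := inv_inv _
      have key : eLpNorm ((f a) • fun x => ∏ i ∈ t, f i x) p μ ≤
          eLpNorm (f a) r μ * eLpNorm (fun x => ∏ i ∈ t, f i x) ((t.card : ℝ≥0∞) * r⁻¹)⁻¹ μ := by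
        refine eLpNorm_smul_le_mul_eLpNorm ?_ (hf a) (hpqr := ⟨?_⟩)
        · exact (Finset.aestronglyMeasurable_prod t fun i _ => hf i).congr (Filter.Eventually.of_forall fun x => by simp)
        · rw [hp', hp, Finset.card_insert_of_notMem ha]
          push_cast
          ring
      rw [Finset.prod_insert ha]
      refine le_trans (le_of_eq ?_) (key.trans ?_)
      · congr 1; funext x; simp [Finset.prod_insert ha, Pi.smul_apply, smul_eq_mul]
      · exact mul_le_mul_right (ih (inv_inv _)) _

theorem telescope_prod [DecidableEq ι] (s : Finset ι) (u v : ι → Ω → ℝ)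
    (hu : ∀ i, AEStronglyMeasurable (u i) μ) (hv : ∀ i, AEStronglyMeasurable (v i) μ)
    (r : ℝ≥0∞) (C D : ι → ℝ≥0∞)
    (hC : ∀ i, eLpNorm (u i) r μ ≤ C i ∧ eLpNorm (v i) r μ ≤ C i)
    (hD : ∀ i, eLpNorm (fun x => u i x - v i x) r μ ≤ D i)
    (hcard : (s.card : ℝ≥0∞) * r⁻¹ ≤ 1) {p : ℝ≥0∞}
    (hp : p⁻¹ = s.card * r⁻¹) :
    eLpNorm (fun x => (∏ i ∈ s, u i x) - ∏ i ∈ s, v i x) p μ ≤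
      ∑ i ∈ s, D i * ∏ j ∈ s.erase i, C j := by
  classical
  induction s using Finset.induction generalizing p with
  | empty =>
      simp only [Finset.prod_empty, sub_self, Finset.sum_empty]
      simpa using eLpNorm_zero (p := p) (μ := μ)
  | @insert a t ha ih =>
      have hcard' : ((t.card : ℝ≥0∞)) * r⁻¹ ≤ 1 := by
        refine le_trans ?_ hcard
        gcongr
        exact Finset.subset_insert a t
      set p' : ℝ≥0∞ := ((t.card : ℝ≥0∞) * r⁻¹)⁻¹ with hp'def
      have hp'inv : p'⁻¹ = (t.card : ℝ≥0∞) * r⁻¹ := inv_inv _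
      have hsplit : (1:ℝ≥0∞)/p = 1/r + 1/p' := by
        rw [one_div, one_div, one_div, hp'inv, hp, Finset.card_insert_of_notMem ha]
        push_cast; ring
      have hone : (1:ℝ≥0∞) ≤ p := by
        rw [← ENNReal.inv_le_one, hp, Finset.card_insert_of_notMem ha] at *
        exact hcard
      have hmu : AEStronglyMeasurable (fun x => ∏ i ∈ t, u i x) μ :=
        (Finset.aestronglyMeasurable_prod t fun i _ => hu i).congr
          (Filter.Eventually.of_forall fun x => by simp)
      have hmv : AEStronglyMeasurable (fun x => ∏ i ∈ t, v i x) μ :=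
        (Finset.aestronglyMeasurable_prod t fun i _ => hv i).congr
          (Filter.Eventually.of_forall fun x => by simp)
      have hFG : (fun x => (∏ i ∈ insert a t, u i x) - ∏ i ∈ insert a t, v i x) =
          (fun x => u a x * ((∏ i ∈ t, u i x) - ∏ i ∈ t, v i x)) +
          (fun x => (u a x - v a x) * ∏ i ∈ t, v i x) := by
        funext x
        simp only [Finset.prod_insert ha, Pi.add_apply]
        ring
      rw [hFG]
      have hF : AEStronglyMeasurable (fun x => u a x * ((∏ i ∈ t, u i x) - ∏ i ∈ t, v i x)) μ :=
        (hu a).mul (hmu.sub hmv)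
      have hG : AEStronglyMeasurable (fun x => (u a x - v a x) * ∏ i ∈ t, v i x) μ :=
        ((hu a).sub (hv a)).mul hmv
      refine (eLpNorm_add_le hF hG hone).trans ?_
      have hHolderF : eLpNorm (fun x => u a x * ((∏ i ∈ t, u i x) - ∏ i ∈ t, v i x)) p μ ≤
          eLpNorm (u a) r μ * eLpNorm (fun x => (∏ i ∈ t, u i x) - ∏ i ∈ t, v i x) p' μ :=
        eLpNorm_smul_le_mul_eLpNorm (𝕜 := ℝ) (E := ℝ) (p := r) (q := p') (r := p)
          (f := fun x => (∏ i ∈ t, u i x) - ∏ i ∈ t, v i x) (φ := u a)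
          (hmu.sub hmv) (hu a) (hpqr := ⟨by rw [← one_div, ← one_div, ← one_div, hsplit]⟩)
      have hHolderG : eLpNorm (fun x => (u a x - v a x) * ∏ i ∈ t, v i x) p μ ≤
          eLpNorm (fun x => u a x - v a x) r μ * eLpNorm (fun x => ∏ i ∈ t, v i x) p' μ :=
        eLpNorm_smul_le_mul_eLpNorm (𝕜 := ℝ) (E := ℝ) (p := r) (q := p') (r := p)
          (f := fun x => ∏ i ∈ t, v i x) (φ := fun x => u a x - v a x)
          hmv ((hu a).sub (hv a)) (hpqr := ⟨by rw [← one_div, ← one_div, ← one_div, hsplit]⟩)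
      have hIH := ih hcard' hp'inv
      have hprodv : eLpNorm (fun x => ∏ i ∈ t, v i x) p' μ ≤ ∏ j ∈ t, C j :=
        (holder_prod t v hv r hp'inv).trans (Finset.prod_le_prod' fun j _ => (hC j).2)
      calc _ ≤ (eLpNorm (u a) r μ * eLpNorm (fun x => (∏ i ∈ t, u i x) - ∏ i ∈ t, v i x) p' μ) +
            (eLpNorm (fun x => u a x - v a x) r μ * eLpNorm (fun x => ∏ i ∈ t, v i x) p' μ) :=
              add_le_add hHolderF hHolderG
        _ ≤ C a * (∑ i ∈ t, D i * ∏ j ∈ t.erase i, C j) + D a * ∏ j ∈ t, C j := by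
              exact add_le_add (mul_le_mul' (hC a).1 hIH) (mul_le_mul' (hD a) hprodv)
        _ = ∑ i ∈ insert a t, D i * ∏ j ∈ (insert a t).erase i, C j := by
              rw [Finset.sum_insert ha, Finset.erase_insert ha, Finset.mul_sum, add_comm]
              congr 1
              refine Finset.sum_congr rfl fun i hi => ?_
              have hia : i ≠ a := by rintro rfl; exact ha hi
              rw [Finset.erase_insert_of_ne hia.symm,
                Finset.prod_insert (fun hmem => ha (Finset.erase_subset _ _ hmem))]
              ring

lemma integrable_abs_rpow_mul_exp {b q : ℝ} (hb : 0 < b) (hq : 0 ≤ q) :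
    Integrable (fun t : ℝ => |t| ^ q * Real.exp (-b * t ^ 2)) := by
  have hfun : (fun t : ℝ => |t| ^ q * Real.exp (-b * t ^ 2)) =
      fun t : ℝ => |t| ^ q * Real.exp (-b * |t| ^ 2) := by
    funext t; rw [sq_abs]
  rw [hfun]
  set f : ℝ → ℝ := fun t => t ^ q * Real.exp (-b * t ^ 2) with hf
  have hIoi : IntegrableOn (fun x : ℝ => f |x|) (Ioi 0) := by
    refine (integrableOn_rpow_mul_exp_neg_mul_sq hb (by linarith : (-1:ℝ) < q)).congr_fun
      (fun x hx => ?_) measurableSet_Ioi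
    simp only [f, abs_of_pos (Set.mem_Ioi.mp hx)]
  have int_Iic : IntegrableOn (fun x : ℝ => f |x|) (Iic 0) := by
    rw [← Measure.map_neg_eq_self (volume : Measure ℝ)]
    have m : MeasurableEmbedding fun x : ℝ => -x := (Homeomorph.neg ℝ).measurableEmbedding
    rw [m.integrableOn_map_iff]
    simp_rw [Function.comp_def, abs_neg, neg_preimage, neg_Iic, neg_zero]
    exact Iff.mpr integrableOn_Ici_iff_integrableOn_Ioi hIoi
  have : IntegrableOn (fun x : ℝ => f |x|) (Iic 0 ∪ Ioi 0) := int_Iic.union hIoi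
  rw [Iic_union_Ioi, integrableOn_univ] at this
  exact this

lemma oneD_moment {h q : ℝ} (hh : 0 < h) (hq : 0 ≤ q) :
    ∫ t : ℝ, |t| ^ q * Real.exp (-t ^ 2 / (2 * h))
      = (2:ℝ) ^ ((q+1)/2) * h ^ ((q+1)/2) * Gamma ((q + 1) / 2) := by
  have h2h : (0:ℝ) < 2 * h := by linarith
  have hb : (0:ℝ) < (2*h)⁻¹ := by positivity
  have hexp : ∀ t : ℝ, Real.exp (-t ^ 2 / (2 * h)) = Real.exp (-(2*h)⁻¹ * t ^ 2) := by
    intro t; congr 1; field_simp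
  simp_rw [hexp]
  have habs : (fun t : ℝ => |t| ^ q * Real.exp (-(2*h)⁻¹ * t ^ 2)) =
      fun t : ℝ => (fun s : ℝ => s ^ q * Real.exp (-(2*h)⁻¹ * s ^ 2)) |t| := by
    funext t; simp [sq_abs]
  rw [habs, integral_comp_abs (f := fun s : ℝ => s ^ q * Real.exp (-(2*h)⁻¹ * s ^ 2))]
  have hIoi : ∫ x in Ioi (0:ℝ), x ^ q * Real.exp (-(2*h)⁻¹ * x ^ 2)
      = ∫ x in Ioi (0:ℝ), x ^ q * Real.exp (-(2*h)⁻¹ * x ^ (2:ℝ)) := by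
    refine setIntegral_congr_fun measurableSet_Ioi (fun x hx => ?_)
    rw [rpow_two]
  rw [hIoi, integral_rpow_mul_exp_neg_mul_rpow two_pos (by linarith) hb]
  rw [← rpow_neg_one ((2*h)), ← rpow_mul h2h.le]
  rw [show (-1 * (-(q + 1) / 2)) = (q+1)/2 by ring]
  rw [mul_rpow two_pos.le hh.le]
  ring

lemma gaussE_lintegral_inner (d : ℕ) {h : ℝ} (hh : 0 < h) {q : ℝ} (hq : 1 ≤ q)
    (b : EuclideanSpace ℝ (Fin d)) :
    ∫⁻ x, (‖⟪b, x⟫‖₊ : ℝ≥0∞) ^ q ∂(gaussE d h)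
      = ENNReal.ofReal
          ((2:ℝ) ^ (q/2) * π ^ (-(1:ℝ)/2) * Gamma ((q+1)/2) * h ^ (q/2) * ‖b‖ ^ q) := by
  have hq0 : (0:ℝ) < q := by linarith
  rcases eq_or_ne b 0 with rfl | hb
  · simp only [inner_zero_left, nnnorm_zero, ENNReal.coe_zero,
      ENNReal.zero_rpow_of_pos hq0, lintegral_zero, norm_zero,
      Real.zero_rpow hq0.ne', mul_zero, ENNReal.ofReal_zero]
  have h2πh : (0:ℝ) < 2 * π * h := by positivity
  -- orthonormal basis with `B i₀ = ‖b‖⁻¹ • b`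
  have hd : 0 < d := by
    rcases Nat.eq_zero_or_pos d with rfl | hd
    · exact absurd (by ext i; exact i.elim0) hb
    · exact hd
  set i₀ : Fin d := ⟨0, hd⟩
  set u : EuclideanSpace ℝ (Fin d) := ‖b‖⁻¹ • b with hu_def
  have hu : ‖u‖ = 1 := norm_smul_inv_norm hb
  have horth : Orthonormal ℝ (({i₀} : Set (Fin d)).restrict (fun _ => u)) := by
    constructor
    · intro i; exact hu
    · intro i j hij; exact absurd (Subsingleton.elim i j) hij
  obtain ⟨B, hB⟩ := horth.exists_orthonormalBasis_extension_of_card_eq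
    (by simp [finrank_euclideanSpace_fin])
  have hBi₀ : B i₀ = u := hB i₀ rfl
  have hinner : ∀ x, ⟪b, x⟫ = ‖b‖ * B.repr x i₀ := by
    intro x
    rw [OrthonormalBasis.repr_apply_apply, hBi₀, hu_def, real_inner_smul_left]
    rw [← mul_assoc, mul_inv_cancel₀ (norm_ne_zero_iff.2 hb), one_mul]
  -- measurability
  set ρ : EuclideanSpace ℝ (Fin d) → ℝ≥0∞ := fun y =>
    ENNReal.ofReal ((2 * π * h) ^ (-(d : ℝ) / 2) * Real.exp (-‖y‖ ^ 2 / (2 * h))) with hρ_def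
  have hρmeas : Measurable ρ :=
    (measurable_const.mul
      (((measurable_norm.pow_const 2).neg.div_const (2*h)).exp)).ennreal_ofReal
  have hinner_meas : Measurable fun x : EuclideanSpace ℝ (Fin d) => ⟪b, x⟫ :=
    (continuous_const.inner continuous_id).measurable
  have hgmeas : Measurable fun x : EuclideanSpace ℝ (Fin d) => (‖⟪b, x⟫‖₊ : ℝ≥0∞) ^ q :=
    (hinner_meas.nnnorm.coe_nnreal_ennreal).pow_const q
  rw [gaussE, lintegral_withDensity_eq_lintegral_mul _ hρmeas hgmeas]
  have hMP := B.measurePreserving_repr_symm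
  simp only [Pi.mul_apply]
  rw [← hMP.lintegral_comp (f := fun x => ρ x * (‖⟪b, x⟫‖₊ : ℝ≥0∞) ^ q) (hρmeas.mul hgmeas)]
  have hev : Measurable fun z : EuclideanSpace ℝ (Fin d) => z i₀ :=
    (measurable_pi_apply i₀).comp (MeasurableEquiv.toLp 2 (Fin d → ℝ)).symm.measurable
  have hF2meas : Measurable fun z : EuclideanSpace ℝ (Fin d) =>
      ρ z * (‖‖b‖ * z i₀‖₊ : ℝ≥0∞) ^ q :=
    hρmeas.mul (((measurable_const.mul hev).nnnorm.coe_nnreal_ennreal).pow_const q)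
  have hrot : ∀ z : EuclideanSpace ℝ (Fin d),
      ρ (B.repr.symm z) * (‖⟪b, B.repr.symm z⟫‖₊ : ℝ≥0∞) ^ q
        = ρ z * (‖‖b‖ * z i₀‖₊ : ℝ≥0∞) ^ q := by
    intro z
    have h1 : ρ (B.repr.symm z) = ρ z := by
      simp only [hρ_def]
      rw [B.repr.symm.norm_map]
    rw [h1, hinner, LinearIsometryEquiv.apply_symm_apply]
  simp_rw [hrot]
  have hPi := (EuclideanSpace.volume_preserving_symm_measurableEquiv_toLp (Fin d)).symm
  rw [← hPi.lintegral_comp hF2meas]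
  -- the one–dimensional factors
  set f : Fin d → ℝ → ℝ := fun i t =>
    ((2 * π * h) ^ (-(1:ℝ)/2) * Real.exp (-t ^ 2 / (2 * h))) *
      (if i = i₀ then ‖b‖ ^ q * |t| ^ q else 1) with hf_def
  have hpoint : ∀ z : Fin d → ℝ,
      ρ ((MeasurableEquiv.toLp 2 (Fin d → ℝ)).symm.symm z) *
        (‖‖b‖ * ((MeasurableEquiv.toLp 2 (Fin d → ℝ)).symm.symm z) i₀‖₊ : ℝ≥0∞) ^ q
        = ENNReal.ofReal (∏ i, f i (z i)) := by
    intro z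
    have happly : ∀ i, ((MeasurableEquiv.toLp 2 (Fin d → ℝ)).symm.symm z) i = z i := fun _ => rfl
    have hnormsq : ‖((MeasurableEquiv.toLp 2 (Fin d → ℝ)).symm.symm z :
        EuclideanSpace ℝ (Fin d))‖ ^ 2 = ∑ i, z i ^ 2 := by
      rw [EuclideanSpace.norm_eq, Real.sq_sqrt (by positivity)]
      simp [happly, Real.norm_eq_abs, sq_abs]
    have hX : (‖‖b‖ * z i₀‖₊ : ℝ≥0∞) ^ q = ENNReal.ofReal ((‖b‖ * |z i₀|) ^ q) := by
      rw [← enorm_eq_nnnorm, Real.enorm_eq_ofReal_abs, ENNReal.ofReal_rpow_of_nonneg (abs_nonneg _) hq0.le,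
        abs_mul, abs_norm]
    simp only [hρ_def, happly, hnormsq, hX]
    rw [← ENNReal.ofReal_mul (by positivity)]
    congr 1
    have hprod : ∏ i, f i (z i) =
        ((∏ _i : Fin d, (2 * π * h) ^ (-(1:ℝ)/2)) * ∏ i, Real.exp (-(z i) ^ 2 / (2 * h))) *
          (‖b‖ ^ q * |z i₀| ^ q) := by
      rw [hf_def]
      rw [Finset.prod_mul_distrib, Finset.prod_mul_distrib]
      congr 1
      rw [Finset.prod_ite_eq' Finset.univ i₀ (fun i => ‖b‖ ^ q * |z i| ^ q)]
      simp
    rw [hprod, Finset.prod_const, ← Real.exp_sum]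
    have hc : ((2 * π * h) ^ (-(1:ℝ)/2)) ^ (Finset.univ : Finset (Fin d)).card
        = (2 * π * h) ^ (-(d:ℝ)/2) := by
      rw [Finset.card_univ, Fintype.card_fin, ← rpow_natCast ((2 * π * h) ^ (-(1:ℝ)/2)) d,
        ← rpow_mul h2πh.le]
      congr 1
      ring
    have hsum : ∑ i, -(z i) ^ 2 / (2 * h) = -(∑ i, z i ^ 2) / (2 * h) := by
      rw [← Finset.sum_div, ← Finset.sum_neg_distrib]
    rw [hc, hsum, ← mul_rpow (norm_nonneg _) (abs_nonneg _)]
  simp_rw [hpoint]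
  have hfint : ∀ i, Integrable (f i) := by
    intro i
    have hexp' : ∀ t : ℝ, Real.exp (-(2*h)⁻¹ * t ^ 2) = Real.exp (-t ^ 2 / (2 * h)) := by
      intro t; congr 1; field_simp
    by_cases hi : i = i₀
    · subst hi
      have := (integrable_abs_rpow_mul_exp (b := (2*h)⁻¹) (by positivity) hq0.le).const_mul
        ((2 * π * h) ^ (-(1:ℝ)/2) * ‖b‖ ^ q)
      refine this.congr (Filter.Eventually.of_forall fun t => ?_)
      simp only [hf_def, eq_self_iff_true, if_true, hexp' t]
      ring
    · have := (integrable_exp_neg_mul_sq (b := (2*h)⁻¹) (by positivity)).const_mul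
        ((2 * π * h) ^ (-(1:ℝ)/2))
      refine this.congr (Filter.Eventually.of_forall fun t => ?_)
      simp only [hf_def, if_neg hi, hexp' t, mul_one]
  have hnn : 0 ≤ᵐ[(volume : Measure (Fin d → ℝ))] fun z => ∏ i, f i (z i) := by
    refine Filter.Eventually.of_forall fun z => Finset.prod_nonneg fun i _ => ?_
    simp only [hf_def]
    split_ifs <;> positivity
  rw [MeasureTheory.volume_pi, ← MeasureTheory.ofReal_integral_eq_lintegral_ofReal (Integrable.fintype_prod hfint) hnn]
  rw [MeasureTheory.integral_fintype_prod_eq_prod (f := f)]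
  congr 1
  have hother : ∀ j : Fin d, j ≠ i₀ → ∫ t : ℝ, f j t = 1 := by
    intro j hj
    have hexp' : ∀ t : ℝ, Real.exp (-t ^ 2 / (2 * h)) = Real.exp (-(2*h)⁻¹ * t ^ 2) := by
      intro t; congr 1; field_simp
    simp only [hf_def, if_neg hj, mul_one]
    simp_rw [hexp']
    rw [MeasureTheory.integral_const_mul, integral_gaussian]
    rw [show π / (2*h)⁻¹ = 2 * π * h by field_simp]
    rw [sqrt_eq_rpow, ← rpow_add h2πh]
    norm_num
  rw [Finset.prod_eq_single i₀ (fun j _ hj => hother j hj)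
    (fun hmem => absurd (Finset.mem_univ i₀) hmem)]
  simp only [hf_def, eq_self_iff_true, if_true]
  have : ∫ t : ℝ, (2 * π * h) ^ (-(1:ℝ)/2) * Real.exp (-t ^ 2 / (2 * h)) *
      (‖b‖ ^ q * |t| ^ q) = (2 * π * h) ^ (-(1:ℝ)/2) * ‖b‖ ^ q *
        ∫ t : ℝ, |t| ^ q * Real.exp (-t ^ 2 / (2 * h)) := by
    rw [← MeasureTheory.integral_const_mul]
    congr 1; funext t; ring
  rw [this, oneD_moment hh hq0.le]
  have e1 : (2 * π * h:ℝ) ^ (-(1:ℝ)/2)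
      = 2 ^ (-(1:ℝ)/2) * π ^ (-(1:ℝ)/2) * h ^ (-(1:ℝ)/2) := by
    rw [mul_rpow (by positivity) hh.le, mul_rpow (by norm_num) pi_pos.le]
  have e2 : (2:ℝ) ^ (q/2) = 2 ^ (-(1:ℝ)/2) * 2 ^ ((q+1)/2) := by
    rw [← rpow_add two_pos]; congr 1; ring
  have e3 : h ^ (q/2) = h ^ (-(1:ℝ)/2) * h ^ ((q+1)/2) := by
    rw [← rpow_add hh]; congr 1; ring
  rw [e1, e2, e3]
  ring

lemma eLpNorm_inner_gaussE (d : ℕ) {h : ℝ} (hh : 0 < h) {q : ℝ} (hq : 1 ≤ q)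
    (b : EuclideanSpace ℝ (Fin d)) :
    eLpNorm (fun x => ⟪b, x⟫) (ENNReal.ofReal q) (gaussE d h)
      = ENNReal.ofReal (Kconst q * h ^ ((1:ℝ)/2) * ‖b‖) := by
  have hq0 : (0:ℝ) < q := lt_of_lt_of_le one_pos hq
  have hΓ : (0:ℝ) ≤ Gamma ((q+1)/2) := (Gamma_pos_of_pos (by linarith)).le
  rw [eLpNorm_eq_lintegral_rpow_enorm_toReal (ENNReal.ofReal_pos.mpr hq0).ne' ENNReal.ofReal_ne_top,
    ENNReal.toReal_ofReal hq0.le]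
  simp_rw [enorm_eq_nnnorm]
  rw [gaussE_lintegral_inner d hh hq b,
    ENNReal.ofReal_rpow_of_nonneg (by positivity) (by positivity)]
  congr 1
  rw [mul_rpow (by positivity) (rpow_nonneg (norm_nonneg b) q),
    mul_rpow (by positivity) (rpow_nonneg hh.le _),
    mul_rpow (by positivity) hΓ,
    mul_rpow (rpow_nonneg (by norm_num) _) (rpow_nonneg pi_pos.le _),
    ← rpow_mul (by norm_num : (0:ℝ) ≤ 2), ← rpow_mul pi_pos.le,
    ← rpow_mul hh.le, ← rpow_mul (norm_nonneg b)]
  rw [show q / 2 * (1/q) = 1/2 by field_simp [mul_comm],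
    show -(1:ℝ)/2 * (1/q) = -1/(2*q) by field_simp [mul_comm],
    show q * (1/q) = 1 by field_simp, rpow_one, Kconst]

end Aux

/-- `L^p` estimate for the difference of products of powers of linear functionals
composed or not with an orthogonal projection `P`. -/
theorem stmt_17 (d : ℕ) (h : ℝ) (hh : 0 < h)
    (n : ℕ) (hn : 0 < n) (a : Fin n → EuclideanSpace ℝ (Fin d))
    (α : Fin n → ℕ) (hα : ∀ i, 0 < α i)
    (P : EuclideanSpace ℝ (Fin d) →L[ℝ] EuclideanSpace ℝ (Fin d))
    (hPsa : IsSelfAdjoint P) (hPproj : P ∘L P = P)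
    (p : ℝ) (hp : 1 ≤ p) :
    eLpNorm (fun x => (∏ i, ⟪a i, P x⟫ ^ α i) - ∏ i, ⟪a i, x⟫ ^ α i)
        (ENNReal.ofReal p) (gaussE d h) ≤
      ENNReal.ofReal
        (Kconst (p * (∑ i, α i : ℕ)) ^ (∑ i, α i : ℕ) *
          h ^ (((∑ i, α i : ℕ) : ℝ) / 2) *
          (⨆ i, ‖a i‖) ^ ((∑ i, α i : ℕ) - 1) *
          ∑ i, (α i : ℝ) * ‖P (a i) - a i‖) := by
  classical
  -- notation
  set m : ℕ := ∑ i, α i with hm_def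
  have hm0 : 0 < m := Finset.sum_pos (fun i _ => hα i) ⟨⟨0, hn⟩, Finset.mem_univ _⟩
  set q : ℝ := p * m with hq_def
  have hmR : (1:ℝ) ≤ (m:ℝ) := by exact_mod_cast hm0
  have hq1 : 1 ≤ q := by nlinarith
  set r : ℝ≥0∞ := ENNReal.ofReal q with hr_def
  set M : ℝ := ⨆ i, ‖a i‖ with hM_def
  have hM : ∀ i, ‖a i‖ ≤ M := fun i => le_ciSup (f := fun i => ‖a i‖) (Set.Finite.bddAbove (Set.finite_range _)) i
  have hM0 : 0 ≤ M := (norm_nonneg _).trans (hM ⟨0, hn⟩)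
  have hΓ : (0:ℝ) ≤ Gamma ((q+1)/2) := (Gamma_pos_of_pos (by linarith)).le
  have hK : 0 ≤ Kconst q := by
    rw [Kconst]
    exact mul_nonneg (mul_nonneg (rpow_nonneg (by norm_num) _) (rpow_nonneg pi_pos.le _))
      (rpow_nonneg hΓ _)
  have hsqrt : (0:ℝ) ≤ h ^ ((1:ℝ)/2) := rpow_nonneg hh.le _
  -- P is a contraction
  have hsym : ∀ x y : EuclideanSpace ℝ (Fin d), ⟪P x, y⟫ = ⟪x, P y⟫ := fun x y =>
    hPsa.isSymmetric x y
  have hPle : ∀ c : EuclideanSpace ℝ (Fin d), ‖P c‖ ≤ ‖c‖ := by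
    intro c
    rcases eq_or_lt_of_le (norm_nonneg (P c)) with h0 | h0
    · rw [← h0]; exact norm_nonneg c
    have h1 : ‖P c‖ * ‖P c‖ = ⟪c, P (P c)⟫ := by
      rw [← hsym, real_inner_self_eq_norm_mul_norm]
    have h2 : P (P c) = P c := by
      rw [← ContinuousLinearMap.comp_apply, hPproj]
    have h3 : ‖P c‖ * ‖P c‖ ≤ ‖c‖ * ‖P c‖ := by
      rw [h1, h2]
      exact real_inner_le_norm c (P c)
    exact le_of_mul_le_mul_right h3 h0
  -- flattened index type
  set ι := (i : Fin n) × Fin (α i) with hι_def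
  have hcardι : Fintype.card ι = m := by
    simp [hι_def, hm_def]
  set u : ι → EuclideanSpace ℝ (Fin d) → ℝ := fun j => fun x => ⟪P (a j.1), x⟫ with hu_def
  set v : ι → EuclideanSpace ℝ (Fin d) → ℝ := fun j => fun x => ⟪a j.1, x⟫ with hv_def
  have hu : ∀ j : ι, AEStronglyMeasurable (u j) (gaussE d h) := fun j =>
    (continuous_const.inner continuous_id).aestronglyMeasurable
  have hv : ∀ j : ι, AEStronglyMeasurable (v j) (gaussE d h) := fun j =>
    (continuous_const.inner continuous_id).aestronglyMeasurable
  set C : ι → ℝ≥0∞ := fun _ => ENNReal.ofReal (Kconst q * h ^ ((1:ℝ)/2) * M) with hC_def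
  set D : ι → ℝ≥0∞ := fun j =>
    ENNReal.ofReal (Kconst q * h ^ ((1:ℝ)/2) * ‖P (a j.1) - a j.1‖) with hD_def
  have hC : ∀ j : ι, eLpNorm (u j) r (gaussE d h) ≤ C j ∧
      eLpNorm (v j) r (gaussE d h) ≤ C j := by
    intro j
    constructor
    · rw [hu_def, eLpNorm_inner_gaussE d hh hq1]
      exact ENNReal.ofReal_le_ofReal (by
        have := (hPle (a j.1)).trans (hM j.1)
        gcongr)
    · rw [hv_def, eLpNorm_inner_gaussE d hh hq1]
      exact ENNReal.ofReal_le_ofReal (by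
        have := hM j.1
        gcongr)
  have hD : ∀ j : ι, eLpNorm (fun x => u j x - v j x) r (gaussE d h) ≤ D j := by
    intro j
    have : (fun x => u j x - v j x) = fun x => ⟪P (a j.1) - a j.1, x⟫ := by
      funext x; rw [hu_def, hv_def]; rw [inner_sub_left]
    rw [this, eLpNorm_inner_gaussE d hh hq1]
  -- exponent bookkeeping
  have hpne : ENNReal.ofReal p ≠ 0 := (ENNReal.ofReal_pos.mpr (by linarith)).ne'
  have hmne : ((m:ℝ≥0∞)) ≠ 0 := by exact_mod_cast hm0.ne'
  have hofq : r = ENNReal.ofReal p * m := by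
    rw [hr_def, hq_def, ENNReal.ofReal_mul (by linarith : (0:ℝ) ≤ p), ENNReal.ofReal_natCast]
  have hrinv : r⁻¹ = (ENNReal.ofReal p)⁻¹ * (m:ℝ≥0∞)⁻¹ := by
    rw [hofq, ENNReal.mul_inv (Or.inl hpne) (Or.inl ENNReal.ofReal_ne_top)]
  have hmulinv : (m:ℝ≥0∞) * r⁻¹ = (ENNReal.ofReal p)⁻¹ := by
    rw [hrinv, mul_comm ((ENNReal.ofReal p)⁻¹) _, ← mul_assoc,
      ENNReal.mul_inv_cancel hmne (ENNReal.natCast_ne_top m), one_mul]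
  have hp_inv : (ENNReal.ofReal p)⁻¹ =
      (((Finset.univ : Finset ι).card : ℝ≥0∞)) * r⁻¹ := by
    rw [Finset.card_univ, hcardι, hmulinv]
  have hcard : (((Finset.univ : Finset ι).card : ℝ≥0∞)) * r⁻¹ ≤ 1 := by
    rw [Finset.card_univ, hcardι, hmulinv, ENNReal.inv_le_one]
    exact ENNReal.one_le_ofReal.mpr hp
  -- rewrite the function as a difference of flattened products
  have hfun : (fun x => (∏ i, ⟪a i, P x⟫ ^ α i) - ∏ i, ⟪a i, x⟫ ^ α i)
      = fun x => (∏ j : ι, u j x) - ∏ j : ι, v j x := by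
    funext x
    congr 1
    · rw [← Finset.univ_sigma_univ, Finset.prod_sigma]
      refine Finset.prod_congr rfl fun i _ => ?_
      simp only [hu_def]
      rw [Finset.prod_const, Finset.card_univ, Fintype.card_fin, hsym]
    · rw [← Finset.univ_sigma_univ, Finset.prod_sigma]
      refine Finset.prod_congr rfl fun i _ => ?_
      simp only [hv_def]
      rw [Finset.prod_const, Finset.card_univ, Fintype.card_fin]
  rw [hfun]
  refine (telescope_prod Finset.univ u v hu hv r C D hC hD hcard hp_inv).trans ?_
  -- final computation
  have hcC : ∀ j : ι, ∏ k ∈ Finset.univ.erase j, C k = ENNReal.ofReal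
      ((Kconst q * h ^ ((1:ℝ)/2) * M) ^ (m - 1)) := by
    intro j
    rw [hC_def, Finset.prod_const, Finset.card_erase_of_mem (Finset.mem_univ j),
      Finset.card_univ, hcardι, ENNReal.ofReal_pow (by positivity)]
  have hterm : ∀ j : ι, D j * ∏ k ∈ Finset.univ.erase j, C k = ENNReal.ofReal
      ((Kconst q * h ^ ((1:ℝ)/2) * ‖P (a j.1) - a j.1‖) *
        (Kconst q * h ^ ((1:ℝ)/2) * M) ^ (m - 1)) := by
    intro j
    rw [hcC j, hD_def, ← ENNReal.ofReal_mul (by positivity)]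
  calc ∑ j : ι, D j * ∏ k ∈ Finset.univ.erase j, C k
      = ENNReal.ofReal (∑ j : ι, (Kconst q * h ^ ((1:ℝ)/2) * ‖P (a j.1) - a j.1‖) *
          (Kconst q * h ^ ((1:ℝ)/2) * M) ^ (m - 1)) := by
        rw [ENNReal.ofReal_sum_of_nonneg (fun j _ => by positivity)]
        exact Finset.sum_congr rfl fun j _ => hterm j
    _ ≤ _ := by
        refine ENNReal.ofReal_le_ofReal (le_of_eq ?_)
        have hKpow : Kconst q ^ m = Kconst q * Kconst q ^ (m - 1) := by
          conv_lhs => rw [← Nat.succ_pred_eq_of_pos hm0]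
          rw [pow_succ', Nat.pred_eq_sub_one]
        have hhpow : h ^ ((m:ℝ)/2) = h ^ ((1:ℝ)/2) * (h ^ ((1:ℝ)/2)) ^ (m - 1) := by
          rw [← rpow_natCast (h ^ ((1:ℝ)/2)) (m-1), ← rpow_mul hh.le, ← rpow_add hh]
          congr 1
          rw [Nat.cast_sub hm0]
          push_cast; ring
        rw [← Finset.univ_sigma_univ, Finset.sum_sigma, Finset.mul_sum]
        refine Finset.sum_congr rfl fun i _ => ?_
        simp only [Finset.sum_const, Finset.card_univ, Fintype.card_fin, nsmul_eq_mul]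
        rw [hKpow, hhpow, mul_pow, mul_pow]
        ring
end

section
/- Let μ_h be the centered Gaussian of variance h ≤ 1 on ℝ^d, let q ∈ [1,∞), s ∈ (0,1], and X ∈ ℝ^d. For G : ℝ^d → ℂ measurable and bounded, one has ‖G(X + s·)‖_{L^q(μ_h)} ≤ e^{|X|²/(2h)} ‖G‖_{L^{q + 1/s²}(μ_{s²h})}. -/
open MeasureTheory Real
open scoped ENNReal RealInnerProductSpace

variable {d : ℕ}

lemma rho_meas (h : ℝ) : Measurable (fun y : EuclideanSpace ℝ (Fin d) =>
    ENNReal.ofReal ((2 * π * h) ^ (-(d : ℝ) / 2) * Real.exp (-‖y‖ ^ 2 / (2 * h)))) := by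
  fun_prop

lemma lintegral_gaussE (h : ℝ) {f : EuclideanSpace ℝ (Fin d) → ℝ≥0∞} (hf : Measurable f) :
    ∫⁻ y, f y ∂(gaussE d h) =
      ∫⁻ y, ENNReal.ofReal ((2 * π * h) ^ (-(d : ℝ) / 2) * Real.exp (-‖y‖ ^ 2 / (2 * h)))
        * f y ∂(volume : Measure (EuclideanSpace ℝ (Fin d))) := by
  rw [gaussE, lintegral_withDensity_eq_lintegral_mul _ (rho_meas h) hf]
  rfl

lemma lintegral_smul_vol {s : ℝ} (hs : 0 < s) {f : EuclideanSpace ℝ (Fin d) → ℝ≥0∞}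
    (hf : Measurable f) :
    ∫⁻ y, f (s • y) ∂(volume : Measure (EuclideanSpace ℝ (Fin d))) =
      ENNReal.ofReal ((s ^ d)⁻¹) * ∫⁻ z, f z ∂volume := by
  have hmap := Measure.map_addHaar_smul (volume : Measure (EuclideanSpace ℝ (Fin d))) hs.ne'
  rw [← lintegral_map hf (measurable_const_smul s), hmap, lintegral_smul_measure,
    finrank_euclideanSpace_fin, abs_of_pos (by positivity), smul_eq_mul]

lemma lintegral_add_vol (a : EuclideanSpace ℝ (Fin d)) {f : EuclideanSpace ℝ (Fin d) → ℝ≥0∞}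
    (hf : Measurable f) :
    ∫⁻ y, f (a + y) ∂(volume : Measure (EuclideanSpace ℝ (Fin d))) = ∫⁻ z, f z ∂volume :=
  (measurePreserving_add_left volume a).lintegral_comp hf


lemma gauss_norm {v : ℝ} (hv : 0 < v) :
    ∫⁻ z : EuclideanSpace ℝ (Fin d), ENNReal.ofReal (Real.exp (-‖z‖ ^ 2 / (2 * v))) ∂volume
      = ENNReal.ofReal ((2 * π * v) ^ ((d : ℝ) / 2)) := by
  have hb : (0:ℝ) < (2 * v)⁻¹ := by positivity
  have hbc : (0:ℝ) < ((((2 * v)⁻¹ : ℝ)) : ℂ).re := by simpa using hb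
  have hint : Integrable (fun z : EuclideanSpace ℝ (Fin d) =>
      Real.exp (-(2 * v)⁻¹ * ‖z‖ ^ 2)) := by
    have h1 := GaussianFourier.integrable_cexp_neg_mul_sq_norm_add (V := EuclideanSpace ℝ (Fin d)) hbc 0 0
    have h2 := h1.norm
    simp only [zero_mul, add_zero] at h2
    convert h2 using 2 with z
    rw [Complex.norm_exp]
    congr 1
    rw [show -((((2 * v)⁻¹ : ℝ)) : ℂ) * (‖z‖ : ℂ) ^ 2
        = ((-(2 * v)⁻¹ * ‖z‖ ^ 2 : ℝ) : ℂ) by push_cast; ring, Complex.ofReal_re]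
  have heq : ∀ z : EuclideanSpace ℝ (Fin d),
      -‖z‖ ^ 2 / (2 * v) = -(2 * v)⁻¹ * ‖z‖ ^ 2 := by
    intro z; field_simp
  simp_rw [heq]
  rw [← ofReal_integral_eq_lintegral_ofReal hint (Filter.Eventually.of_forall fun z => (Real.exp_pos _).le)]
  congr 1
  have := GaussianFourier.integral_rexp_neg_mul_sq_norm (V := EuclideanSpace ℝ (Fin d)) hb
  simp_rw [neg_mul] at this ⊢
  rw [this, finrank_euclideanSpace_fin]
  congr 1
  field_simp

lemma gauss_mgf {v : ℝ} (hv : 0 < v) (c : ℝ) (X : EuclideanSpace ℝ (Fin d)) :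
    ∫⁻ z : EuclideanSpace ℝ (Fin d), ENNReal.ofReal ((2 * π * v) ^ (-(d : ℝ) / 2) *
        Real.exp ((-‖z‖ ^ 2 + c * (2 * ⟪z, X⟫ - ‖X‖ ^ 2)) / (2 * v))) ∂volume
      = ENNReal.ofReal (Real.exp ((c ^ 2 - c) * ‖X‖ ^ 2 / (2 * v))) := by
  have key : ∀ z : EuclideanSpace ℝ (Fin d),
      (2 * π * v) ^ (-(d : ℝ) / 2) *
          Real.exp ((-‖z‖ ^ 2 + c * (2 * ⟪z, X⟫ - ‖X‖ ^ 2)) / (2 * v))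
        = Real.exp (-‖z - c • X‖ ^ 2 / (2 * v)) *
            ((2 * π * v) ^ (-(d : ℝ) / 2) * Real.exp ((c ^ 2 - c) * ‖X‖ ^ 2 / (2 * v))) := by
    intro z
    have hsub : ‖z - c • X‖ ^ 2 = ‖z‖ ^ 2 - 2 * (c * ⟪z, X⟫) + c ^ 2 * ‖X‖ ^ 2 := by
      rw [norm_sub_sq_real, real_inner_smul_right, norm_smul]
      simp [mul_pow, sq_abs]
    have hexp : Real.exp ((c ^ 2 - c) * ‖X‖ ^ 2 / (2 * v)) *
        Real.exp (-‖z - c • X‖ ^ 2 / (2 * v))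
          = Real.exp ((-‖z‖ ^ 2 + c * (2 * ⟪z, X⟫ - ‖X‖ ^ 2)) / (2 * v)) := by
      rw [← Real.exp_add]
      congr 1
      rw [hsub]; ring
    rw [mul_comm (Real.exp (-‖z - c • X‖ ^ 2 / (2 * v))) _,
      mul_assoc ((2 * π * v) ^ (-(d : ℝ) / 2)), hexp]
  simp_rw [key, ENNReal.ofReal_mul (Real.exp_pos _).le]
  rw [lintegral_mul_const _ (by fun_prop)]
  have htr : ∫⁻ z : EuclideanSpace ℝ (Fin d),
      ENNReal.ofReal (Real.exp (-‖z - c • X‖ ^ 2 / (2 * v))) ∂volume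
        = ENNReal.ofReal ((2 * π * v) ^ ((d : ℝ) / 2)) := by
    simp_rw [sub_eq_neg_add]
    exact (lintegral_add_vol (-(c • X)) (by fun_prop)).trans (gauss_norm hv)
  rw [htr, ← ENNReal.ofReal_mul (by positivity)]
  congr 1
  rw [← mul_assoc, ← Real.rpow_add (by positivity),
    show (d : ℝ) / 2 + -(d : ℝ) / 2 = 0 by ring, Real.rpow_zero, one_mul]

lemma gaussE_smul {h s : ℝ} (hh : 0 < h) (hs : 0 < s)
    {f : EuclideanSpace ℝ (Fin d) → ℝ≥0∞} (hf : Measurable f) :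
    ∫⁻ y, f (s • y) ∂(gaussE d h) = ∫⁻ z, f z ∂(gaussE d (s ^ 2 * h)) := by
  have hF : Measurable (fun z : EuclideanSpace ℝ (Fin d) =>
      ENNReal.ofReal ((2 * π * h) ^ (-(d : ℝ) / 2) * Real.exp (-‖s⁻¹ • z‖ ^ 2 / (2 * h)))
        * f z) := by fun_prop
  rw [lintegral_gaussE h (by fun_prop : Measurable fun y : EuclideanSpace ℝ (Fin d) => f (s • y)),
    lintegral_gaussE (s ^ 2 * h) hf]
  have hrw : (fun y : EuclideanSpace ℝ (Fin d) =>
      ENNReal.ofReal ((2 * π * h) ^ (-(d : ℝ) / 2) * Real.exp (-‖y‖ ^ 2 / (2 * h))) * f (s • y))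
      = fun y => (fun z : EuclideanSpace ℝ (Fin d) =>
          ENNReal.ofReal ((2 * π * h) ^ (-(d : ℝ) / 2) *
            Real.exp (-‖s⁻¹ • z‖ ^ 2 / (2 * h))) * f z) (s • y) := by
    funext y
    simp only [smul_smul, inv_mul_cancel₀ hs.ne', one_smul]
  rw [hrw, lintegral_smul_vol hs hF, ← lintegral_const_mul _ hF]
  refine lintegral_congr fun z => ?_
  rw [← mul_assoc, ← ENNReal.ofReal_mul (by positivity)]
  congr 2
  have hsq : ((s : ℝ) ^ 2) ^ (-(d : ℝ) / 2) = (s ^ d)⁻¹ := by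
    rw [← Real.rpow_natCast s 2, ← Real.rpow_mul hs.le,
      show (2 : ℕ) * (-(d : ℝ) / 2) = -(d : ℝ) by push_cast; ring,
      Real.rpow_neg hs.le, Real.rpow_natCast]
  have hcoeff : (2 * π * (s ^ 2 * h)) ^ (-(d : ℝ) / 2)
      = (s ^ d)⁻¹ * (2 * π * h) ^ (-(d : ℝ) / 2) := by
    rw [show 2 * π * (s ^ 2 * h) = (s ^ 2) * (2 * π * h) by ring,
      Real.mul_rpow (by positivity) (by positivity), hsq]
  have hnorm : -‖s⁻¹ • z‖ ^ 2 / (2 * h) = -‖z‖ ^ 2 / (2 * (s ^ 2 * h)) := by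
    have h1 : ‖s⁻¹ • z‖ ^ 2 = (s ^ 2)⁻¹ * ‖z‖ ^ 2 := by
      rw [norm_smul, Real.norm_eq_abs, mul_pow, sq_abs, inv_pow]
    rw [h1, div_eq_div_iff (by positivity) (by positivity), neg_mul, neg_mul, neg_inj,
      show (s ^ 2)⁻¹ * ‖z‖ ^ 2 * (2 * (s ^ 2 * h)) = ‖z‖ ^ 2 * (2 * h) * (s ^ 2 * (s ^ 2)⁻¹)
        by ring, mul_inv_cancel₀ (by positivity), mul_one]
  rw [hcoeff, hnorm]
  ring

lemma gaussE_translate {v : ℝ} (hv : 0 < v) (X : EuclideanSpace ℝ (Fin d))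
    {f : EuclideanSpace ℝ (Fin d) → ℝ≥0∞} (hf : Measurable f) :
    ∫⁻ z, f (X + z) ∂(gaussE d v)
      = ∫⁻ w, ENNReal.ofReal (Real.exp ((2 * ⟪w, X⟫ - ‖X‖ ^ 2) / (2 * v))) * f w
          ∂(gaussE d v) := by
  have hg : Measurable (fun w : EuclideanSpace ℝ (Fin d) =>
      ENNReal.ofReal ((2 * π * v) ^ (-(d : ℝ) / 2) * Real.exp (-‖w - X‖ ^ 2 / (2 * v)))
        * f w) := by fun_prop
  have hinner : Measurable fun w : EuclideanSpace ℝ (Fin d) => ⟪w, X⟫ :=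
    (continuous_id.inner continuous_const).measurable
  have hD : Measurable fun w : EuclideanSpace ℝ (Fin d) =>
      ENNReal.ofReal (Real.exp ((2 * ⟪w, X⟫ - ‖X‖ ^ 2) / (2 * v))) :=
    (Real.measurable_exp.comp
      (((hinner.const_mul 2).sub measurable_const).div_const _)).ennreal_ofReal
  rw [lintegral_gaussE v (by fun_prop : Measurable fun z : EuclideanSpace ℝ (Fin d) => f (X + z)),
    lintegral_gaussE v (f := fun w => ENNReal.ofReal (Real.exp ((2 * ⟪w, X⟫ - ‖X‖ ^ 2) / (2 * v))) * f w) (hD.mul hf)]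
  have hrw : (fun z : EuclideanSpace ℝ (Fin d) =>
      ENNReal.ofReal ((2 * π * v) ^ (-(d : ℝ) / 2) * Real.exp (-‖z‖ ^ 2 / (2 * v))) * f (X + z))
      = fun z => (fun w : EuclideanSpace ℝ (Fin d) =>
          ENNReal.ofReal ((2 * π * v) ^ (-(d : ℝ) / 2) *
            Real.exp (-‖w - X‖ ^ 2 / (2 * v))) * f w) (X + z) := by
    funext z
    simp only [add_sub_cancel_left]
  rw [hrw, lintegral_add_vol X hg]
  refine lintegral_congr fun w => ?_
  rw [← mul_assoc, ← ENNReal.ofReal_mul (by positivity)]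
  congr 2
  rw [mul_assoc ((2 * π * v) ^ (-(d : ℝ) / 2)) (Real.exp (-‖w‖ ^ 2 / (2 * v))) _,
    ← Real.exp_add]
  congr 1
  rw [Real.exp_eq_exp, norm_sub_sq_real]
  ring

lemma gauss_exp_moment {v : ℝ} (hv : 0 < v) (c : ℝ) (X : EuclideanSpace ℝ (Fin d)) :
    ∫⁻ w, ENNReal.ofReal (Real.exp ((2 * ⟪w, X⟫ - ‖X‖ ^ 2) / (2 * v))) ^ c ∂(gaussE d v)
      = ENNReal.ofReal (Real.exp ((c ^ 2 - c) * ‖X‖ ^ 2 / (2 * v))) := by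
  have hinner : Measurable fun w : EuclideanSpace ℝ (Fin d) => ⟪w, X⟫ :=
    (continuous_id.inner continuous_const).measurable
  have hD : Measurable fun w : EuclideanSpace ℝ (Fin d) =>
      ENNReal.ofReal (Real.exp (((2 * ⟪w, X⟫ - ‖X‖ ^ 2) / (2 * v)) * c)) :=
    (Real.measurable_exp.comp
      ((((hinner.const_mul 2).sub measurable_const).div_const _).mul_const _)).ennreal_ofReal
  have hpt : ∀ w : EuclideanSpace ℝ (Fin d),
      ENNReal.ofReal (Real.exp ((2 * ⟪w, X⟫ - ‖X‖ ^ 2) / (2 * v))) ^ c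
        = ENNReal.ofReal (Real.exp (((2 * ⟪w, X⟫ - ‖X‖ ^ 2) / (2 * v)) * c)) := by
    intro w
    rw [ENNReal.ofReal_rpow_of_pos (Real.exp_pos _), ← Real.exp_mul]
  simp_rw [hpt]
  rw [lintegral_gaussE v hD]
  have hcomb : ∀ w : EuclideanSpace ℝ (Fin d),
      ENNReal.ofReal ((2 * π * v) ^ (-(d : ℝ) / 2) * Real.exp (-‖w‖ ^ 2 / (2 * v))) *
          ENNReal.ofReal (Real.exp (((2 * ⟪w, X⟫ - ‖X‖ ^ 2) / (2 * v)) * c))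
        = ENNReal.ofReal ((2 * π * v) ^ (-(d : ℝ) / 2) *
            Real.exp ((-‖w‖ ^ 2 + c * (2 * ⟪w, X⟫ - ‖X‖ ^ 2)) / (2 * v))) := by
    intro w
    rw [← ENNReal.ofReal_mul (by positivity),
      mul_assoc ((2 * π * v) ^ (-(d : ℝ) / 2)) (Real.exp (-‖w‖ ^ 2 / (2 * v))) _,
      ← Real.exp_add]
    congr 2
    rw [Real.exp_eq_exp]
    ring
  simp_rw [hcomb]
  exact gauss_mgf hv c X

/-- Dilation–translation estimate:
`‖G(X + s·)‖_{L^q(μ_h)} ≤ e^{|X|²/(2h)} ‖G‖_{L^{q+1/s²}(μ_{s²h})}` for `h ≤ 1`,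
`s ∈ (0,1]`, `q ∈ [1,∞)` and bounded measurable `G`. -/
theorem stmt_19 (d : ℕ) (h : ℝ) (hh : 0 < h) (hh1 : h ≤ 1)
    (q : ℝ) (hq : 1 ≤ q) (s : ℝ) (hs : 0 < s) (hs1 : s ≤ 1)
    (X : EuclideanSpace ℝ (Fin d))
    (G : EuclideanSpace ℝ (Fin d) → ℂ) (hGm : Measurable G)
    (M : ℝ) (hGb : ∀ x, ‖G x‖ ≤ M) :
    eLpNorm (fun y => G (X + s • y)) (ENNReal.ofReal q) (gaussE d h) ≤
      ENNReal.ofReal (Real.exp (‖X‖ ^ 2 / (2 * h))) *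
        eLpNorm G (ENNReal.ofReal (q + 1 / s ^ 2)) (gaussE d (s ^ 2 * h)) := by
  have hq0 : (0:ℝ) < q := lt_of_lt_of_le one_pos hq
  have hv : (0:ℝ) < s ^ 2 * h := by positivity
  set q' : ℝ := q + 1 / s ^ 2 with hq'def
  have hqq' : q < q' := lt_add_of_pos_right q (by positivity)
  have hq'0 : (0:ℝ) < q' := hq0.trans hqq'
  have hs2q' : s ^ 2 * q' = s ^ 2 * q + 1 := by
    rw [hq'def]; field_simp
  have hc0 : (0:ℝ) < s ^ 2 * q' := by positivity
  have hconj : Real.HolderConjugate (q' / q) (s ^ 2 * q') := by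
    refine Real.holderConjugate_iff.mpr ⟨?_, ?_⟩
    · exact (one_lt_div hq0).mpr hqq'
    · rw [inv_div]
      field_simp
      nlinarith [hs2q']
  -- measurability
  have hf1 : Measurable fun w : EuclideanSpace ℝ (Fin d) => ((‖G w‖₊ : ℝ≥0∞)) ^ q :=
    hGm.nnnorm.coe_nnreal_ennreal.pow_const q
  have hinner : Measurable fun w : EuclideanSpace ℝ (Fin d) => ⟪w, X⟫ :=
    (continuous_id.inner continuous_const).measurable
  have hD : Measurable fun w : EuclideanSpace ℝ (Fin d) =>
      ENNReal.ofReal (Real.exp ((2 * ⟪w, X⟫ - ‖X‖ ^ 2) / (2 * (s ^ 2 * h)))) :=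
    (Real.measurable_exp.comp
      (((hinner.const_mul 2).sub measurable_const).div_const _)).ennreal_ofReal
  -- unfold eLpNorm
  rw [eLpNorm_eq_lintegral_rpow_enorm_toReal
      (by simpa [ENNReal.ofReal_eq_zero, not_le] using hq0) ENNReal.ofReal_ne_top,
    eLpNorm_eq_lintegral_rpow_enorm_toReal
      (by simpa [ENNReal.ofReal_eq_zero, not_le] using hq'0) ENNReal.ofReal_ne_top,
    ENNReal.toReal_ofReal hq0.le, ENNReal.toReal_ofReal hq'0.le]
  simp only [enorm_eq_nnnorm]
  set A : ℝ≥0∞ := (∫⁻ w, ((‖G w‖₊ : ℝ≥0∞)) ^ q' ∂(gaussE d (s ^ 2 * h))) ^ (1 / q')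
    with hA
  set EE : ℝ≥0∞ := ENNReal.ofReal (Real.exp (‖X‖ ^ 2 / (2 * h))) with hEE
  -- main chain for the q-th power integral
  have step1 : ∫⁻ y, ((‖G (X + s • y)‖₊ : ℝ≥0∞)) ^ q ∂(gaussE d h)
      = ∫⁻ z, ((‖G (X + z)‖₊ : ℝ≥0∞)) ^ q ∂(gaussE d (s ^ 2 * h)) :=
    gaussE_smul hh hs (f := fun z => ((‖G (X + z)‖₊ : ℝ≥0∞)) ^ q) (by fun_prop)
  have step2 : ∫⁻ z, ((‖G (X + z)‖₊ : ℝ≥0∞)) ^ q ∂(gaussE d (s ^ 2 * h))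
      = ∫⁻ w, ENNReal.ofReal (Real.exp ((2 * ⟪w, X⟫ - ‖X‖ ^ 2) / (2 * (s ^ 2 * h)))) *
          ((‖G w‖₊ : ℝ≥0∞)) ^ q ∂(gaussE d (s ^ 2 * h)) :=
    gaussE_translate hv X hf1
  have hold := ENNReal.lintegral_mul_le_Lp_mul_Lq (gaussE d (s ^ 2 * h)) hconj
    hf1.aemeasurable hD.aemeasurable
  simp only [Pi.mul_apply] at hold
  have hfpow : ∀ w : EuclideanSpace ℝ (Fin d),
      (((‖G w‖₊ : ℝ≥0∞)) ^ q) ^ (q' / q) = ((‖G w‖₊ : ℝ≥0∞)) ^ q' := by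
    intro w
    rw [← ENNReal.rpow_mul, show q * (q' / q) = q' by field_simp]
  have hDint : (∫⁻ w, (ENNReal.ofReal
        (Real.exp ((2 * ⟪w, X⟫ - ‖X‖ ^ 2) / (2 * (s ^ 2 * h))))) ^ (s ^ 2 * q')
        ∂(gaussE d (s ^ 2 * h))) ^ (1 / (s ^ 2 * q')) = EE ^ q := by
    rw [gauss_exp_moment hv (s ^ 2 * q') X,
      ENNReal.ofReal_rpow_of_pos (Real.exp_pos _), ← Real.exp_mul, hEE,
      ENNReal.ofReal_rpow_of_pos (Real.exp_pos _), ← Real.exp_mul]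
    congr 2
    have h1 : (s ^ 2 * q') ^ 2 - s ^ 2 * q' = (s ^ 2 * q') * (s ^ 2 * q) := by
      rw [hs2q']; ring
    rw [h1]
    have hsne : s ≠ 0 := hs.ne'
    have hhne : h ≠ 0 := hh.ne'
    have hq'ne : q' ≠ 0 := hq'0.ne'
    field_simp
  have chain : ∫⁻ y, ((‖G (X + s • y)‖₊ : ℝ≥0∞)) ^ q ∂(gaussE d h) ≤ (A * EE) ^ q := by
    rw [step1, step2]
    calc ∫⁻ w, ENNReal.ofReal (Real.exp ((2 * ⟪w, X⟫ - ‖X‖ ^ 2) / (2 * (s ^ 2 * h)))) *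
          ((‖G w‖₊ : ℝ≥0∞)) ^ q ∂(gaussE d (s ^ 2 * h))
        = ∫⁻ w, ((‖G w‖₊ : ℝ≥0∞)) ^ q *
            ENNReal.ofReal (Real.exp ((2 * ⟪w, X⟫ - ‖X‖ ^ 2) / (2 * (s ^ 2 * h))))
            ∂(gaussE d (s ^ 2 * h)) := lintegral_congr fun w => mul_comm _ _
      _ ≤ (∫⁻ w, (((‖G w‖₊ : ℝ≥0∞)) ^ q) ^ (q' / q) ∂(gaussE d (s ^ 2 * h))) ^ (1 / (q' / q)) *
            (∫⁻ w, (ENNReal.ofReal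
              (Real.exp ((2 * ⟪w, X⟫ - ‖X‖ ^ 2) / (2 * (s ^ 2 * h))))) ^ (s ^ 2 * q')
              ∂(gaussE d (s ^ 2 * h))) ^ (1 / (s ^ 2 * q')) := hold
      _ = (A * EE) ^ q := by
          simp_rw [hfpow]
          rw [hDint, show (1:ℝ) / (q' / q) = 1 / q' * q by field_simp, ENNReal.rpow_mul,
            ← hA, ENNReal.mul_rpow_of_nonneg _ _ hq0.le]
  calc (∫⁻ y, ((‖G (X + s • y)‖₊ : ℝ≥0∞)) ^ q ∂(gaussE d h)) ^ (1 / q)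
      ≤ ((A * EE) ^ q) ^ (1 / q) := ENNReal.rpow_le_rpow chain (by positivity)
    _ = A * EE := by
        rw [← ENNReal.rpow_mul, mul_one_div_cancel hq0.ne', ENNReal.rpow_one]
    _ = EE * A := mul_comm _ _
end
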